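/- arXiv:1112.4945 — 2 statements merged into one kernel-verified Lean document; each statement's English description precedes it below -/
import Mathlib

section
/- Let q be a positive integer and a₁,…,a_r distinct residues mod q with gcd(a_j,q) = 1. Then for every complex s with Re s > 1, ∫₁^∞ ( Σ_{j=1}^r Π(x,q,a_j) − (r/φ(q))·Π(x) ) · x^{−s−1} dx = (1/s)·Σ_{χ mod q, χ ≠ χ₀} c_χ·log L(s,χ) + (r/(s·φ(q)))·Σ_{p | q} log(1 − p^{−s}), where c_χ = (1/φ(q))·Σ_{j=1}^r conj(χ)(a_j) and log L(s,χ) denotes the absolutely convergent series Σ_p Σ_{k≥1} χ(p)^k/(k·p^{ks}). -/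
open scoped Classical

open MeasureTheory

/-- `Π(x,q,a) = Σ_{p^k ≤ x, p prime, k ≥ 1, p^k ≡ a (mod q)} 1/k`. -/
noncomputable def PiCnt (q : ℕ) (a : ZMod q) (x : ℝ) : ℝ :=
  ∑' p : ℕ, ∑' k : ℕ,
    if p.Prime ∧ 1 ≤ k ∧ (p : ℝ) ^ k ≤ x ∧ (p : ZMod q) ^ k = a then (1 : ℝ) / k else 0

/-- `Π(x) = Σ_{p^k ≤ x, p prime, k ≥ 1} 1/k`. -/
noncomputable def PiAll (x : ℝ) : ℝ :=
  ∑' p : ℕ, ∑' k : ℕ,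
    if p.Prime ∧ 1 ≤ k ∧ (p : ℝ) ^ k ≤ x then (1 : ℝ) / k else 0

/-- The absolutely convergent series `log L(s,χ) = Σ_p Σ_{k≥1} χ(p)^k/(k·p^{ks})`. -/
noncomputable def logL {q : ℕ} (χ : DirichletCharacter ℂ q) (s : ℂ) : ℂ :=
  ∑' (p : Nat.Primes) (k : ℕ),
    χ ((p : ℕ) : ZMod q) ^ (k + 1) / ((k + 1) * ((p : ℕ) : ℂ) ^ ((k + 1 : ℕ) * s))

/-- The coefficient `c_χ = (1/φ(q))·Σ_j conj(χ(a_j))`. -/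
noncomputable def cChi {q : ℕ} {r : ℕ} (a : Fin r → ZMod q)
    (χ : DirichletCharacter ℂ q) : ℂ :=
  (1 / (Nat.totient q : ℂ)) * ∑ j, starRingEnd ℂ (χ (a j))

namespace DirIntAux

/-! ### Reindexing double sums over `ℕ × ℕ` to sums over `Nat.Primes × ℕ` -/

lemma summable_aux {x : ℝ} (g : ℕ → ℕ → ℝ)
    (hg : ∀ p k, g p k ≠ 0 → p.Prime ∧ 1 ≤ k ∧ (p : ℝ) ^ k ≤ x) :
    Summable (fun pk : ℕ × ℕ => g pk.1 pk.2) := by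
  apply summable_of_ne_finset_zero
    (s := Finset.range (⌊x⌋₊ + 1) ×ˢ Finset.range (⌊x⌋₊ + 1))
  rintro ⟨p, k⟩ hpk
  by_contra h
  obtain ⟨hp, hk, hx⟩ := hg p k h
  apply hpk
  rw [Finset.mem_product, Finset.mem_range, Finset.mem_range]
  constructor
  · have h1 : (p : ℝ) ≤ (p : ℝ) ^ k :=
      le_self_pow₀ (by exact_mod_cast hp.one_lt.le) (by omega)
    have : p ≤ ⌊x⌋₊ := Nat.le_floor (h1.trans hx)
    omega
  · have h2 : (2 : ℝ) ^ k ≤ (p : ℝ) ^ k := by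
      apply pow_le_pow_left₀ (by norm_num)
      exact_mod_cast hp.two_le
    have h3 : (k : ℝ) < (2 : ℝ) ^ k := by
      have := Nat.lt_two_pow_self (n := k)
      exact_mod_cast this
    have : k ≤ ⌊x⌋₊ := Nat.le_floor ((h3.trans_le h2).le.trans hx)
    omega

lemma summable_primes {x : ℝ} (g : ℕ → ℕ → ℝ)
    (hg : ∀ p k, g p k ≠ 0 → p.Prime ∧ 1 ≤ k ∧ (p : ℝ) ^ k ≤ x) :
    Summable (fun pk : Nat.Primes × ℕ => g pk.1 (pk.2 + 1)) := by
  have hinj : Function.Injective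
      (fun pk : Nat.Primes × ℕ => ((pk.1 : ℕ), pk.2 + 1)) := by
    rintro ⟨⟨p, hp⟩, k⟩ ⟨⟨p', hp'⟩, k'⟩ h
    simp only [Prod.mk.injEq] at h
    simp [Prod.ext_iff, Subtype.ext_iff, h.1, Nat.add_right_cancel h.2]
  exact (summable_aux g hg).comp_injective hinj

lemma tsum_eq_tsum_primes {x : ℝ} (g : ℕ → ℕ → ℝ)
    (hg : ∀ p k, g p k ≠ 0 → p.Prime ∧ 1 ≤ k ∧ (p : ℝ) ^ k ≤ x) :
    (∑' p : ℕ, ∑' k : ℕ, g p k) = ∑' pk : Nat.Primes × ℕ, g pk.1 (pk.2 + 1) := by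
  have hG := summable_aux g hg
  rw [← Summable.tsum_prod' hG (fun p => hG.prod_factor p)]
  refine tsum_eq_tsum_of_ne_zero_bij
    (fun ⟨pk, _⟩ => ((pk.1 : ℕ), pk.2 + 1)) ?_ ?_ ?_
  · rintro ⟨⟨⟨p, hp⟩, k⟩, hs⟩ ⟨⟨⟨p', hp'⟩, k'⟩, hs'⟩ h
    simp only [Prod.mk.injEq] at h
    simp [Prod.ext_iff, Subtype.ext_iff, h.1, Nat.add_right_cancel h.2]
  · rintro ⟨p, k⟩ hf
    simp only [Function.mem_support] at hf
    obtain ⟨hp, hk, -⟩ := hg p k hf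
    refine ⟨⟨⟨⟨p, hp⟩, k - 1⟩, ?_⟩, ?_⟩
    · simp only [Function.mem_support]
      simpa [Nat.sub_add_cancel hk] using hf
    · simp [Nat.sub_add_cancel hk]
  · rintro ⟨⟨⟨p, hp⟩, k⟩, hs⟩
    rfl

/-! ### Representations of `PiCnt` and `PiAll` -/

noncomputable def cnt (q : ℕ) (c : ZMod q) (x : ℝ) (pk : Nat.Primes × ℕ) : ℝ :=
  if (pk.1 : ℝ) ^ (pk.2 + 1) ≤ x ∧ ((pk.1 : ℕ) : ZMod q) ^ (pk.2 + 1) = c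
    then ((pk.2 : ℝ) + 1)⁻¹ else 0

noncomputable def alls (x : ℝ) (pk : Nat.Primes × ℕ) : ℝ :=
  if (pk.1 : ℝ) ^ (pk.2 + 1) ≤ x then ((pk.2 : ℝ) + 1)⁻¹ else 0

lemma hg_cnt (q : ℕ) (c : ZMod q) (x : ℝ) : ∀ (p k : ℕ),
    (if p.Prime ∧ 1 ≤ k ∧ (p : ℝ) ^ k ≤ x ∧ (p : ZMod q) ^ k = c then (1 : ℝ) / k else 0) ≠ 0 →
    p.Prime ∧ 1 ≤ k ∧ (p : ℝ) ^ k ≤ x := by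
  intro p k h
  by_cases hc : p.Prime ∧ 1 ≤ k ∧ (p : ℝ) ^ k ≤ x ∧ (p : ZMod q) ^ k = c
  · exact ⟨hc.1, hc.2.1, hc.2.2.1⟩
  · simp [hc] at h

lemma hg_all (x : ℝ) : ∀ (p k : ℕ),
    (if p.Prime ∧ 1 ≤ k ∧ (p : ℝ) ^ k ≤ x then (1 : ℝ) / k else 0) ≠ 0 →
    p.Prime ∧ 1 ≤ k ∧ (p : ℝ) ^ k ≤ x := by
  intro p k h
  by_cases hc : p.Prime ∧ 1 ≤ k ∧ (p : ℝ) ^ k ≤ x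
  · exact hc
  · simp [hc] at h

lemma PiCnt_eq (q : ℕ) (c : ZMod q) (x : ℝ) :
    PiCnt q c x = ∑' pk : Nat.Primes × ℕ, cnt q c x pk := by
  rw [PiCnt, tsum_eq_tsum_primes _ (hg_cnt q c x)]
  refine tsum_congr fun pk => ?_
  obtain ⟨⟨p, hp⟩, k⟩ := pk
  simp only [cnt]
  split_ifs with h1 h2 h2
  · push_cast
    rw [one_div]
  · exact absurd ⟨h1.2.2.1, h1.2.2.2⟩ h2
  · exact absurd ⟨hp, Nat.succ_le_succ k.zero_le, h2.1, h2.2⟩ h1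
  · rfl

lemma summable_cnt (q : ℕ) (c : ZMod q) (x : ℝ) :
    Summable (cnt q c x) := by
  have := summable_primes _ (hg_cnt q c x)
  refine this.congr fun pk => ?_
  obtain ⟨⟨p, hp⟩, k⟩ := pk
  simp only [cnt]
  split_ifs with h1 h2 h2
  · push_cast
    rw [one_div]
  · exact absurd ⟨h1.2.2.1, h1.2.2.2⟩ h2
  · exact absurd ⟨hp, Nat.succ_le_succ k.zero_le, h2.1, h2.2⟩ h1
  · rfl

lemma PiAll_eq (x : ℝ) :
    PiAll x = ∑' pk : Nat.Primes × ℕ, alls x pk := by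
  rw [PiAll, tsum_eq_tsum_primes _ (hg_all x)]
  refine tsum_congr fun pk => ?_
  obtain ⟨⟨p, hp⟩, k⟩ := pk
  simp only [alls]
  split_ifs with h1 h2 h2
  · push_cast
    rw [one_div]
  · exact absurd h1.2.2 h2
  · exact absurd ⟨hp, Nat.succ_le_succ k.zero_le, h2⟩ h1
  · rfl

lemma summable_alls (x : ℝ) : Summable (alls x) := by
  have := summable_primes _ (hg_all x)
  refine this.congr fun pk => ?_
  obtain ⟨⟨p, hp⟩, k⟩ := pk
  simp only [alls]
  split_ifs with h1 h2 h2
  · push_cast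
    rw [one_div]
  · exact absurd h1.2.2 h2
  · exact absurd ⟨hp, Nat.succ_le_succ k.zero_le, h2⟩ h1
  · rfl

/-! ### The pointwise representation of the integrand -/

noncomputable def W (q r : ℕ) (a : Fin r → ZMod q) (pk : Nat.Primes × ℕ) : ℝ :=
  ((∑ j, if ((pk.1 : ℕ) : ZMod q) ^ (pk.2 + 1) = a j then (1 : ℝ) else 0)
      - (r : ℝ) / q.totient) / ((pk.2 : ℝ) + 1)

noncomputable def T (q r : ℕ) (a : Fin r → ZMod q) (s : ℂ) (pk : Nat.Primes × ℕ) :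
    ℝ → ℂ :=
  Set.indicator (Set.Ici ((pk.1 : ℝ) ^ (pk.2 + 1)))
    (fun y : ℝ => ((W q r a pk : ℝ) : ℂ) * (y : ℂ) ^ (-s - 1))

lemma combine (q r : ℕ) (a : Fin r → ZMod q) (x : ℝ) (pk : Nat.Primes × ℕ) :
    (∑ j, cnt q (a j) x pk) - ((r : ℝ) / q.totient) * alls x pk
      = if (pk.1 : ℝ) ^ (pk.2 + 1) ≤ x then W q r a pk else 0 := by
  by_cases h : (pk.1 : ℝ) ^ (pk.2 + 1) ≤ x
  · rw [if_pos h]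
    simp only [cnt, alls, if_pos h, h, true_and, W]
    have he : ∀ j : Fin r,
        (if ((pk.1 : ℕ) : ZMod q) ^ (pk.2 + 1) = a j then ((pk.2 : ℝ) + 1)⁻¹ else 0)
          = (if ((pk.1 : ℕ) : ZMod q) ^ (pk.2 + 1) = a j then (1 : ℝ) else 0)
            * ((pk.2 : ℝ) + 1)⁻¹ := by
      intro j; split_ifs <;> simp
    rw [Finset.sum_congr rfl fun j _ => he j, ← Finset.sum_mul, div_eq_mul_inv, if_true]
    ring
  · rw [if_neg h]
    simp [cnt, alls, h]

lemma pointwise (q r : ℕ) (a : Fin r → ZMod q) (s : ℂ) (x : ℝ) :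
    (((∑ j, PiCnt q (a j) x) - ((r : ℝ) / Nat.totient q) * PiAll x : ℝ) : ℂ)
        * (x : ℂ) ^ (-s - 1)
      = ∑' pk : Nat.Primes × ℕ, T q r a s pk x := by
  have h1 : (∑ j, PiCnt q (a j) x) - ((r : ℝ) / Nat.totient q) * PiAll x
      = ∑' pk : Nat.Primes × ℕ,
          ((∑ j, cnt q (a j) x pk) - ((r : ℝ) / q.totient) * alls x pk) := by
    rw [Summable.tsum_sub (summable_sum fun j _ => summable_cnt q (a j) x)
      ((summable_alls x).mul_left _), Summable.tsum_finsetSum (fun j _ => summable_cnt q (a j) x),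
      tsum_mul_left, PiAll_eq]
    congr 1
    exact Finset.sum_congr rfl fun j _ => PiCnt_eq q (a j) x
  rw [h1, Complex.ofReal_tsum, ← tsum_mul_right]
  refine tsum_congr fun pk => ?_
  rw [combine]
  by_cases h : (pk.1 : ℝ) ^ (pk.2 + 1) ≤ x
  · rw [if_pos h, T, Set.indicator_of_mem (Set.mem_Ici.mpr h)]
  · rw [if_neg h, T, Set.indicator_of_notMem (by simpa using h)]
    simp

/-! ### Integral computations -/

lemma Ici_subset {b : ℝ} (hb : 1 < b) : Set.Ici b ⊆ Set.Ioi 1 :=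
  fun _ hy => lt_of_lt_of_le hb hy

lemma indicator_integrable {b : ℝ} (c : ℂ) {s : ℂ} (hs : 1 < s.re) :
    Integrable (Set.indicator (Set.Ici b) (fun y : ℝ => c * (y : ℂ) ^ (-s - 1)))
      (volume.restrict (Set.Ioi (1 : ℝ))) := by
  have h : IntegrableOn (fun y : ℝ => (y : ℂ) ^ (-s - 1)) (Set.Ioi (1 : ℝ)) :=
    integrableOn_Ioi_cpow_of_lt (by simp [Complex.sub_re, Complex.neg_re]; linarith) one_pos
  exact (h.const_mul c).indicator measurableSet_Ici

lemma indicator_integral {b : ℝ} (hb : 1 < b) (c : ℂ) {s : ℂ} (hs : 1 < s.re) :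
    ∫ x in Set.Ioi (1 : ℝ),
        Set.indicator (Set.Ici b) (fun y : ℝ => c * (y : ℂ) ^ (-s - 1)) x
      = c * ((b : ℂ) ^ (-s)) / s := by
  rw [integral_indicator measurableSet_Ici,
    Measure.restrict_restrict measurableSet_Ici,
    Set.inter_eq_left.mpr (Ici_subset hb),
    integral_Ici_eq_integral_Ioi, integral_const_mul,
    integral_Ioi_cpow_of_lt (by simp [Complex.sub_re, Complex.neg_re]; linarith)
      (lt_trans one_pos hb),
    show -s - 1 + 1 = -s by ring, neg_div_neg_eq, mul_div_assoc]

lemma indicator_norm_integral {b : ℝ} (hb : 1 < b) (c : ℂ) {s : ℂ} (hs : 1 < s.re) :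
    ∫ x in Set.Ioi (1 : ℝ),
        ‖Set.indicator (Set.Ici b) (fun y : ℝ => c * (y : ℂ) ^ (-s - 1)) x‖
      = ‖c‖ * (b ^ (-s.re)) / s.re := by
  have h1 : ∀ x : ℝ, ‖Set.indicator (Set.Ici b) (fun y : ℝ => c * (y : ℂ) ^ (-s - 1)) x‖
      = Set.indicator (Set.Ici b) (fun y : ℝ => ‖c * (y : ℂ) ^ (-s - 1)‖) x :=
    fun x => norm_indicator_eq_indicator_norm _ _
  simp_rw [h1]
  rw [integral_indicator measurableSet_Ici,
    Measure.restrict_restrict measurableSet_Ici,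
    Set.inter_eq_left.mpr (Ici_subset hb),
    integral_Ici_eq_integral_Ioi,
    setIntegral_congr_fun measurableSet_Ioi
      (g := fun y : ℝ => ‖c‖ * y ^ (-s.re - 1)) ?_,
    integral_const_mul,
    integral_Ioi_rpow_of_lt (by linarith) (lt_trans one_pos hb),
    show -s.re - 1 + 1 = -s.re by ring, neg_div_neg_eq, mul_div_assoc]
  intro y hy
  have hy0 : (0 : ℝ) < y := lt_trans (lt_trans one_pos hb) hy
  simp only
  rw [norm_mul]
  congr 1
  rw [Complex.norm_cpow_eq_rpow_re_of_pos hy0]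
  simp [Complex.sub_re, Complex.neg_re]

lemma W_bound {q : ℕ} (hq : 0 < q) {r : ℕ} (a : Fin r → ZMod q) (pk : Nat.Primes × ℕ) :
    |W q r a pk| ≤ 2 * r := by
  have hφ : (1 : ℝ) ≤ q.totient := by
    have h0 : 0 < q.totient := Nat.totient_pos.mpr hq
    exact_mod_cast h0
  have hden : (1 : ℝ) ≤ ((pk.2 : ℝ) + 1) := by
    have := Nat.cast_nonneg (α := ℝ) pk.2; linarith
  have hS : |∑ j, if ((pk.1 : ℕ) : ZMod q) ^ (pk.2 + 1) = a j then (1 : ℝ) else 0| ≤ r := by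
    refine (Finset.abs_sum_le_sum_abs _ _).trans ?_
    have hone : ∀ j : Fin r, |if ((pk.1 : ℕ) : ZMod q) ^ (pk.2 + 1) = a j then (1 : ℝ) else 0|
        ≤ 1 := fun j => by split_ifs <;> simp
    calc _ ≤ ∑ _j : Fin r, (1 : ℝ) := Finset.sum_le_sum fun j _ => hone j
    _ = r := by simp
  have hB : |(r : ℝ) / q.totient| ≤ r := by
    rw [abs_of_nonneg (by positivity)]
    exact div_le_self (by positivity) hφ
  rw [W, abs_div]
  calc |(∑ j, if ((pk.1 : ℕ) : ZMod q) ^ (pk.2 + 1) = a j then (1 : ℝ) else 0)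
        - (r : ℝ) / q.totient| / |(pk.2 : ℝ) + 1|
      ≤ |(∑ j, if ((pk.1 : ℕ) : ZMod q) ^ (pk.2 + 1) = a j then (1 : ℝ) else 0)
        - (r : ℝ) / q.totient| := div_le_self (abs_nonneg _) (by rwa [abs_of_pos (by positivity)])
    _ ≤ _ := by
        refine (abs_sub _ _).trans ?_
        linarith

/-! ### Summability on `Nat.Primes × ℕ` -/

lemma summable_E {σ : ℝ} (hσ : 1 < σ) :
    Summable (fun pk : Nat.Primes × ℕ => ((pk.1 : ℝ) ^ (pk.2 + 1)) ^ (-σ)) := by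
  have h2 : Summable (fun pk : Nat.Primes × ℕ =>
      ((pk.1 : ℝ) ^ (-σ)) * (((2 : ℝ) ^ (-σ)) ^ pk.2)) :=
    (Nat.Primes.summable_rpow.mpr (by linarith)).mul_of_nonneg
      (summable_geometric_of_lt_one (by positivity)
        (Real.rpow_lt_one_of_one_lt_of_neg one_lt_two (by linarith)))
      (fun p => by positivity) (fun k => by positivity)
  refine h2.of_nonneg_of_le (fun pk => by positivity) (fun pk => ?_)
  obtain ⟨⟨p, hp⟩, k⟩ := pk
  have hp2 : (2 : ℝ) ≤ p := by exact_mod_cast hp.two_le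
  have hp0 : (0 : ℝ) < p := by linarith
  have hle : (p : ℝ) ^ (-σ) ≤ (2 : ℝ) ^ (-σ) := by
    rw [Real.rpow_neg hp0.le, Real.rpow_neg (by norm_num)]
    exact inv_anti₀ (Real.rpow_pos_of_pos two_pos σ)
      (Real.rpow_le_rpow (by norm_num) hp2 (by linarith))
  calc ((p : ℝ) ^ (k + 1)) ^ (-σ)
      = (p : ℝ) ^ (((k + 1 : ℕ) : ℝ) * (-σ)) := by
        rw [← Real.rpow_natCast (p : ℝ) (k + 1), ← Real.rpow_mul hp0.le]
    _ = (p : ℝ) ^ (-σ) * ((p : ℝ) ^ (-σ)) ^ k := by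
        push_cast
        rw [show ((k : ℝ) + 1) * (-σ) = -σ + (-σ) * k by ring, Real.rpow_add hp0,
          Real.rpow_mul hp0.le, Real.rpow_natCast]
    _ ≤ (p : ℝ) ^ (-σ) * ((2 : ℝ) ^ (-σ)) ^ k :=
        mul_le_mul_of_nonneg_left (pow_le_pow_left₀ (by positivity) hle k) (by positivity)

lemma ofReal_pow_cpow (p : ℕ) (m : ℕ) (s : ℂ) :
    ((((p : ℝ) ^ m : ℝ)) : ℂ) ^ (-s) = ((p : ℂ) ^ ((m : ℕ) * s))⁻¹ := by
  have h : (((p : ℝ) ^ m : ℝ) : ℂ) = ((p : ℂ)) ^ m := by push_cast; ring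
  rw [h, ← Complex.natCast_cpow_natCast_mul, mul_neg, Complex.cpow_neg]

lemma norm_cpow_inv (p : ℕ) (hp : 0 < p) (m : ℕ) (s : ℂ) :
    ‖((p : ℂ) ^ ((m : ℕ) * s))⁻¹‖ = ((p : ℝ) ^ m) ^ (-s.re) := by
  have hp0 : (0 : ℝ) < p := by exact_mod_cast hp
  rw [norm_inv, show ((p : ℕ) : ℂ) = (((p : ℝ)) : ℂ) by push_cast; ring,
    Complex.norm_cpow_eq_rpow_re_of_pos hp0,
    show (((m : ℕ) : ℂ) * s).re = (m : ℝ) * s.re by simp,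
    ← Real.rpow_neg_one, ← Real.rpow_natCast (p : ℝ) m, ← Real.rpow_mul hp0.le,
    ← Real.rpow_mul hp0.le]
  ring_nf

lemma summable_of_bound {s : ℂ} (hs : 1 < s.re) (f : Nat.Primes × ℕ → ℂ) (C : ℝ)
    (h : ∀ pk : Nat.Primes × ℕ, ‖f pk‖ ≤ C * ((pk.1 : ℝ) ^ (pk.2 + 1)) ^ (-s.re)) :
    Summable f :=
  Summable.of_norm (((summable_E hs).mul_left C).of_nonneg_of_le
    (fun _ => norm_nonneg _) h)

/-! ### The character identity -/

lemma char_identity {q : ℕ} (hq : 0 < q) {r : ℕ} (a : Fin r → ZMod q)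
    (haq : ∀ j, IsUnit (a j)) (p : ℕ) (hp : p.Prime) (m : ℕ) (hm : 0 < m) :
    (∑ j, if ((p : ℕ) : ZMod q) ^ m = a j then (1 : ℂ) else 0)
        - (r : ℂ) / (q.totient : ℂ)
      = (∑ χ : DirichletCharacter ℂ q,
          if χ ≠ 1 then cChi a χ * (χ ((p : ℕ) : ZMod q)) ^ m else 0)
        + (if p ∣ q then -((r : ℂ) / (q.totient : ℂ)) else 0) := by
  have hφ0 : (q.totient : ℂ) ≠ 0 := by
    exact_mod_cast (Nat.totient_pos.mpr hq).ne'
  by_cases hpq : p ∣ q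
  · have hnu : ¬ IsUnit ((p : ZMod q)) := by
      haveI : NeZero q := ⟨hq.ne'⟩
      rw [ZMod.isUnit_iff_coprime]
      exact fun h => (hp.coprime_iff_not_dvd.mp h) hpq
    have hL : (∑ j, if ((p : ℕ) : ZMod q) ^ m = a j then (1 : ℂ) else 0) = 0 := by
      refine Finset.sum_eq_zero fun j _ => ?_
      rw [if_neg]
      intro h
      exact hnu ((isUnit_pow_iff hm.ne').mp (h ▸ haq j))
    have hR : (∑ χ : DirichletCharacter ℂ q,
        if χ ≠ 1 then cChi a χ * (χ ((p : ℕ) : ZMod q)) ^ m else 0) = 0 := by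
      refine Finset.sum_eq_zero fun χ _ => ?_
      split_ifs with h
      · rw [MulChar.map_nonunit χ hnu, zero_pow hm.ne', mul_zero]
      · rfl
    rw [hL, if_pos hpq]
    rw [hR]
    ring
  · have hu : IsUnit ((p : ZMod q)) := by
      haveI : NeZero q := ⟨hq.ne'⟩
      exact (ZMod.isUnit_iff_coprime p q).mpr (hp.coprime_iff_not_dvd.mpr hpq)
    have key : ∀ j : Fin r, (if ((p : ℕ) : ZMod q) ^ m = a j then (1 : ℂ) else 0)
        = (1 / (q.totient : ℂ)) * ∑ χ : DirichletCharacter ℂ q,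
            starRingEnd ℂ (χ (a j)) * (χ ((p : ℕ) : ZMod q)) ^ m := by
      intro j
      haveI : NeZero q := ⟨hq.ne'⟩
      have horth := DirichletCharacter.sum_char_inv_mul_char_eq ℂ (haq j)
        (((p : ℕ) : ZMod q) ^ m)
      have hconj : ∀ χ : DirichletCharacter ℂ q,
          starRingEnd ℂ (χ (a j)) = χ (a j)⁻¹ := by
        intro χ
        have h1 : χ ((a j)⁻¹) * χ (a j) = 1 := by
          rw [← map_mul, ZMod.inv_mul_of_unit _ (haq j), map_one]
        calc starRingEnd ℂ (χ (a j)) = star (χ (a j)) := rfl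
          _ = χ⁻¹ (a j) := MulChar.star_apply' χ (a j)
          _ = (χ (a j))⁻¹ := MulChar.inv_apply_eq_inv' χ (a j)
          _ = χ (a j)⁻¹ := (eq_inv_of_mul_eq_one_left h1).symm
      simp_rw [hconj]
      simp_rw [map_pow] at horth
      rw [horth]
      split_ifs with h1 h2 h2
      · field_simp
      · exact absurd h1.symm h2
      · exact absurd h2.symm h1
      · simp
    rw [Finset.sum_congr rfl fun j _ => key j]
    rw [← Finset.mul_sum, Finset.sum_comm]
    have step : ∑ χ : DirichletCharacter ℂ q,
        ∑ j, starRingEnd ℂ (χ (a j)) * (χ ((p : ℕ) : ZMod q)) ^ m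
        = ∑ χ : DirichletCharacter ℂ q,
            (∑ j, starRingEnd ℂ (χ (a j))) * (χ ((p : ℕ) : ZMod q)) ^ m :=
      Finset.sum_congr rfl fun χ _ => (Finset.sum_mul _ _ _).symm
    rw [step, Finset.mul_sum]
    have split : ∀ χ : DirichletCharacter ℂ q,
        (1 / (q.totient : ℂ)) * ((∑ j, starRingEnd ℂ (χ (a j))) * (χ ((p : ℕ) : ZMod q)) ^ m)
        = (if χ ≠ 1 then cChi a χ * (χ ((p : ℕ) : ZMod q)) ^ m else 0)
          + (if χ = 1 then (r : ℂ) / (q.totient : ℂ) else 0) := by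
      intro χ
      by_cases h : χ = 1
      · subst h
        rw [if_neg (by simp), if_pos rfl, zero_add]
        have h1 : ∀ j : Fin r, starRingEnd ℂ ((1 : DirichletCharacter ℂ q) (a j)) = 1 := by
          intro j
          rw [MulChar.one_apply (haq j), map_one]
        rw [Finset.sum_congr rfl fun j _ => h1 j, MulChar.one_apply hu]
        simp
        ring
      · rw [if_pos h, if_neg h, add_zero, cChi]
        ring
    rw [Finset.sum_congr rfl fun χ _ => split χ, Finset.sum_add_distrib,
      Finset.sum_ite_eq' Finset.univ (1 : DirichletCharacter ℂ q)
        (fun _ => (r : ℂ) / (q.totient : ℂ)), if_pos (Finset.mem_univ _), if_neg hpq,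
      add_zero]
    ring

/-! ### The logarithm series -/

lemma norm_z_lt_one (p : ℕ) (hp : 2 ≤ p) {s : ℂ} (hs : 1 < s.re) :
    ‖(p : ℂ) ^ (-s)‖ < 1 := by
  have hp0 : (0 : ℝ) < p := by positivity
  rw [show ((p : ℕ) : ℂ) = (((p : ℝ)) : ℂ) by push_cast; ring, 
    Complex.norm_cpow_eq_rpow_re_of_pos hp0, Complex.neg_re]
  exact Real.rpow_lt_one_of_one_lt_of_neg
    (by exact_mod_cast lt_of_lt_of_le one_lt_two hp) (by linarith)

lemma log_series (p : ℕ) (hp : 2 ≤ p) {s : ℂ} (hs : 1 < s.re) :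
    HasSum (fun k : ℕ => ((p : ℂ) ^ (((k + 1) : ℕ) * s))⁻¹ / ((k : ℂ) + 1))
      (-Complex.log (1 - (p : ℂ) ^ (-s))) := by
  have h := Complex.hasSum_taylorSeries_neg_log (norm_z_lt_one p hp hs)
  have h2 := (hasSum_nat_add_iff' (f := fun n : ℕ => ((p : ℂ) ^ (-s)) ^ n / n) 1).mpr h
  simp only [Finset.range_one, Finset.sum_singleton, pow_zero, Nat.cast_zero, div_zero,
    sub_zero] at h2
  refine HasSum.congr_fun h2 fun k => ?_
  rw [Complex.cpow_nat_mul, ← inv_pow, ← Complex.cpow_neg]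
  push_cast
  ring

/-! ### The `p ∣ q` part -/

noncomputable def dvdTerm (q : ℕ) (s : ℂ) (pk : Nat.Primes × ℕ) : ℂ :=
  if (pk.1 : ℕ) ∣ q then ((pk.1 : ℂ) ^ (((pk.2 + 1) : ℕ) * s))⁻¹ / ((pk.2 : ℂ) + 1) else 0

lemma summable_dvdTerm (q : ℕ) {s : ℂ} (hs : 1 < s.re) : Summable (dvdTerm q s) := by
  refine summable_of_bound hs _ 1 fun pk => ?_
  rw [one_mul, dvdTerm]
  split_ifs with h
  · rw [norm_div, norm_cpow_inv _ pk.1.2.pos]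
    refine div_le_self (by positivity) ?_
    rw [show ((pk.2 : ℂ) + 1) = (((pk.2 + 1 : ℕ)) : ℂ) by push_cast; ring,
      Complex.norm_natCast]
    exact_mod_cast Nat.succ_le_succ pk.2.zero_le
  · simp only [norm_zero]
    positivity

lemma tsum_dvdTerm (q : ℕ) (hq : 0 < q) {s : ℂ} (hs : 1 < s.re) :
    ∑' pk : Nat.Primes × ℕ, dvdTerm q s pk
      = ∑ p ∈ q.primeFactors, -Complex.log (1 - (p : ℂ) ^ (-s)) := by
  have hsum := summable_dvdTerm q hs
  rw [Summable.tsum_prod' hsum fun p => hsum.prod_factor p]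
  have hinner : ∀ p : Nat.Primes, (∑' k : ℕ, dvdTerm q s (p, k))
      = if (p : ℕ) ∣ q then -Complex.log (1 - ((p : ℕ) : ℂ) ^ (-s)) else 0 := by
    intro p
    by_cases h : (p : ℕ) ∣ q
    · rw [if_pos h]
      refine HasSum.tsum_eq ?_
      refine (log_series (p : ℕ) p.2.two_le hs).congr_fun fun k => ?_
      rw [dvdTerm, if_pos h]
    · rw [if_neg h]
      simp [dvdTerm, if_neg h]
  rw [tsum_congr hinner]
  set F : ℕ → ℂ := fun n =>
    if n.Prime ∧ n ∣ q then -Complex.log (1 - (n : ℂ) ^ (-s)) else 0 with hFdef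
  have hinj : Function.Injective (fun p : Nat.Primes => (p : ℕ)) :=
    fun p p' h => Subtype.ext h
  have hsupp : Function.support F ⊆ Set.range (fun p : Nat.Primes => (p : ℕ)) := by
    intro n hn
    by_cases h : n.Prime ∧ n ∣ q
    · exact ⟨⟨n, h.1⟩, rfl⟩
    · rw [Function.mem_support, hFdef] at hn
      simp only [if_neg h] at hn
      exact absurd rfl hn
  have step1 := hinj.tsum_eq (f := F) hsupp
  have step0 : ∑' p : Nat.Primes,
      (if (p : ℕ) ∣ q then -Complex.log (1 - ((p : ℕ) : ℂ) ^ (-s)) else 0)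
      = ∑' p : Nat.Primes, F ((p : ℕ)) := by
    refine tsum_congr fun p => ?_
    rw [hFdef]
    simp only [p.2, true_and]
  rw [step0, step1]
  have step2 : ∑' n : ℕ, F n = ∑ n ∈ q.primeFactors, F n := by
    refine tsum_eq_sum fun n hn => ?_
    have hcond : ¬(n.Prime ∧ n ∣ q) :=
      fun h => hn (Nat.mem_primeFactors.mpr ⟨h.1, h.2, hq.ne'⟩)
    simp only [hFdef, if_neg hcond]
  rw [step2]
  refine Finset.sum_congr rfl fun n hn => ?_
  obtain ⟨h1, h2, -⟩ := Nat.mem_primeFactors.mp hn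
  simp only [hFdef]
  rw [if_pos ⟨h1, h2⟩]

/-! ### The `logL` part -/

noncomputable def lTerm (q : ℕ) (χ : DirichletCharacter ℂ q) (s : ℂ)
    (pk : Nat.Primes × ℕ) : ℂ :=
  χ ((pk.1 : ℕ) : ZMod q) ^ (pk.2 + 1)
    / ((pk.2 + 1) * ((pk.1 : ℕ) : ℂ) ^ ((pk.2 + 1 : ℕ) * s))

lemma summable_lTerm (q : ℕ) (χ : DirichletCharacter ℂ q) {s : ℂ} (hs : 1 < s.re) :
    Summable (lTerm q χ s) := by
  refine summable_of_bound hs _ 1 fun pk => ?_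
  rw [one_mul, lTerm, norm_div, norm_mul]
  have hP : ‖((pk.1 : ℕ) : ℂ) ^ ((pk.2 + 1 : ℕ) * s)‖
      = (((pk.1 : ℕ) : ℝ) ^ (pk.2 + 1)) ^ s.re := by
    have := norm_cpow_inv (pk.1 : ℕ) pk.1.2.pos (pk.2 + 1) s
    rw [norm_inv] at this
    rw [← inv_inj, this, ← Real.rpow_neg (by positivity)]
  have hP0 : (0 : ℝ) < (((pk.1 : ℕ) : ℝ) ^ (pk.2 + 1)) ^ s.re := by
    have h1 : (0 : ℝ) < ((pk.1 : ℕ) : ℝ) := by exact_mod_cast pk.1.2.pos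
    positivity
  have hnum : ‖χ ((pk.1 : ℕ) : ZMod q) ^ (pk.2 + 1)‖ ≤ 1 := by
    rw [norm_pow]
    exact pow_le_one₀ (norm_nonneg _) (χ.norm_le_one _)
  have hden1 : (1 : ℝ) ≤ ‖((pk.2 : ℂ) + 1)‖ := by
    rw [show ((pk.2 : ℂ) + 1) = (((pk.2 + 1 : ℕ)) : ℂ) by push_cast; ring,
      Complex.norm_natCast]
    exact_mod_cast Nat.succ_le_succ pk.2.zero_le
  calc ‖χ ((pk.1 : ℕ) : ZMod q) ^ (pk.2 + 1)‖
        / (‖((pk.2 : ℂ) + 1 : ℂ)‖ * ‖((pk.1 : ℕ) : ℂ) ^ ((pk.2 + 1 : ℕ) * s)‖)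
      ≤ 1 / (1 * (((pk.1 : ℕ) : ℝ) ^ (pk.2 + 1)) ^ s.re) := by
        rw [hP]
        refine div_le_div₀ one_pos.le hnum (by rw [one_mul]; exact hP0) ?_
        rw [one_mul]
        calc (((pk.1 : ℕ) : ℝ) ^ (pk.2 + 1)) ^ s.re
            = 1 * (((pk.1 : ℕ) : ℝ) ^ (pk.2 + 1)) ^ s.re := (one_mul _).symm
          _ ≤ ‖((pk.2 : ℂ) + 1 : ℂ)‖ * (((pk.1 : ℕ) : ℝ) ^ (pk.2 + 1)) ^ s.re := by
              exact mul_le_mul_of_nonneg_right hden1 hP0.le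
    _ = (((pk.1 : ℕ) : ℝ) ^ (pk.2 + 1)) ^ (-s.re) := by
        rw [one_mul, one_div, ← Real.rpow_neg (by positivity)]

lemma logL_eq (q : ℕ) (χ : DirichletCharacter ℂ q) {s : ℂ} (hs : 1 < s.re) :
    logL χ s = ∑' pk : Nat.Primes × ℕ, lTerm q χ s pk := by
  rw [logL]
  exact (Summable.tsum_prod' (summable_lTerm q χ hs)
    (fun p => (summable_lTerm q χ hs).prod_factor p)).symm

/-! ### The decomposition of the summand -/

noncomputable def Aterm (q r : ℕ) (a : Fin r → ZMod q) (s : ℂ)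
    (χ : DirichletCharacter ℂ q) (pk : Nat.Primes × ℕ) : ℂ :=
  if χ ≠ 1 then (1 / s * cChi a χ) * lTerm q χ s pk else 0

noncomputable def Bterm (q r : ℕ) (s : ℂ) (pk : Nat.Primes × ℕ) : ℂ :=
  -((r : ℂ) / (s * (q.totient : ℂ))) * dvdTerm q s pk

lemma V_decomp {q : ℕ} (hq : 0 < q) {r : ℕ} (a : Fin r → ZMod q)
    (haq : ∀ j, IsUnit (a j)) (s : ℂ) (pk : Nat.Primes × ℕ) :
    ((W q r a pk : ℝ) : ℂ) * (((pk.1 : ℕ) : ℂ) ^ ((pk.2 + 1 : ℕ) * s))⁻¹ / s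
      = (∑ χ : DirichletCharacter ℂ q, Aterm q r a s χ pk) + Bterm q r s pk := by
  obtain ⟨⟨p, hp⟩, k⟩ := pk
  have hchar := char_identity hq a haq p hp (k + 1) k.succ_pos
  have hcast : ((W q r a (⟨⟨p, hp⟩, k⟩ : Nat.Primes × ℕ) : ℝ) : ℂ)
      = ((∑ j, if ((p : ℕ) : ZMod q) ^ (k + 1) = a j then (1 : ℂ) else 0)
          - (r : ℂ) / (q.totient : ℂ)) / ((k : ℂ) + 1) := by
    rw [W]
    push_cast
    congr 1
    congr 1
    refine Finset.sum_congr rfl fun j _ => ?_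
    split_ifs <;> simp
  rw [hcast, hchar]
  set P := ((p : ℕ) : ℂ) ^ ((k + 1 : ℕ) * s) with hP
  have hsum : ∑ χ : DirichletCharacter ℂ q, Aterm q r a s χ (⟨⟨p, hp⟩, k⟩ : Nat.Primes × ℕ)
      = (∑ χ : DirichletCharacter ℂ q,
          if χ ≠ 1 then cChi a χ * (χ ((p : ℕ) : ZMod q)) ^ (k + 1) else 0)
        * ((k : ℂ) + 1)⁻¹ * P⁻¹ * s⁻¹ := by
    rw [Finset.sum_mul, Finset.sum_mul, Finset.sum_mul]
    refine Finset.sum_congr rfl fun χ _ => ?_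
    rw [Aterm, lTerm]
    split_ifs
    · rw [div_eq_mul_inv, div_eq_mul_inv, mul_inv, one_mul]
      ring
    · simp
  have hB : Bterm q r s (⟨⟨p, hp⟩, k⟩ : Nat.Primes × ℕ)
      = (if p ∣ q then -((r : ℂ) / (q.totient : ℂ)) else 0)
        * ((k : ℂ) + 1)⁻¹ * P⁻¹ * s⁻¹ := by
    rw [Bterm, dvdTerm]
    split_ifs
    · rw [div_eq_mul_inv, div_eq_mul_inv, div_eq_mul_inv, mul_inv]
      ring
    · simp
  rw [hsum, hB, div_eq_mul_inv]
  ring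

lemma summable_Aterm {q : ℕ} {r : ℕ} (a : Fin r → ZMod q) {s : ℂ} (hs : 1 < s.re)
    (χ : DirichletCharacter ℂ q) : Summable (Aterm q r a s χ) := by
  by_cases hχ : χ = 1
  · have h : Aterm q r a s χ = fun _ => 0 := by
      funext pk; rw [Aterm, if_neg (not_not_intro hχ)]
    rw [h]; exact summable_zero
  · have h : Aterm q r a s χ = fun pk => (1 / s * cChi a χ) * lTerm q χ s pk := by
      funext pk; rw [Aterm, if_pos hχ]
    rw [h]; exact (summable_lTerm q χ hs).mul_left _

lemma summable_Bterm (q r : ℕ) {s : ℂ} (hs : 1 < s.re) : Summable (Bterm q r s) :=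
  (summable_dvdTerm q hs).mul_left _

lemma tsum_V {q : ℕ} (hq : 0 < q) {r : ℕ} (a : Fin r → ZMod q)
    (haq : ∀ j, IsUnit (a j)) {s : ℂ} (hs : 1 < s.re) :
    ∑' pk : Nat.Primes × ℕ,
        ((W q r a pk : ℝ) : ℂ) * (((pk.1 : ℕ) : ℂ) ^ ((pk.2 + 1 : ℕ) * s))⁻¹ / s
      = (1 / s) * (∑ χ : DirichletCharacter ℂ q,
            if χ ≠ 1 then cChi a χ * logL χ s else 0)
        + ((r : ℂ) / (s * (Nat.totient q : ℂ)))
          * ∑ p ∈ q.primeFactors, Complex.log (1 - (p : ℂ) ^ (-s)) := by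
  have hsApk : Summable (fun pk => ∑ χ : DirichletCharacter ℂ q, Aterm q r a s χ pk) :=
    summable_sum fun χ _ => summable_Aterm a hs χ
  rw [tsum_congr (V_decomp hq a haq s), Summable.tsum_add hsApk (summable_Bterm q r hs),
    Summable.tsum_finsetSum fun χ _ => summable_Aterm a hs χ]
  congr 1
  · rw [Finset.mul_sum]
    refine Finset.sum_congr rfl fun χ _ => ?_
    by_cases hχ : χ = 1
    · simp [Aterm, hχ]
    · simp only [Aterm, ne_eq, hχ, not_false_eq_true, if_true]
      rw [tsum_mul_left, ← logL_eq q χ hs]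
      ring
  · have hB : ∑' pk : Nat.Primes × ℕ, Bterm q r s pk
        = -((r : ℂ) / (s * (q.totient : ℂ))) * ∑' pk : Nat.Primes × ℕ, dvdTerm q s pk := by
      simp only [Bterm]
      exact tsum_mul_left
    rw [hB, tsum_dvdTerm q hq hs]
    rw [show ∑ p ∈ q.primeFactors, -Complex.log (1 - (p : ℂ) ^ (-s))
        = -∑ p ∈ q.primeFactors, Complex.log (1 - (p : ℂ) ^ (-s)) from
      Finset.sum_neg_distrib _]
    ring

end DirIntAux

/-- The Dirichlet integral identity: for `Re s > 1`,
`∫₁^∞ (Σ_j Π(x,q,a_j) − (r/φ(q))·Π(x))·x^{−s−1} dx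
  = (1/s)·Σ_{χ ≠ χ₀} c_χ·log L(s,χ) + (r/(s·φ(q)))·Σ_{p ∣ q} log(1 − p^{−s})`. -/
theorem dirichlet_integral_identity (q : ℕ) (hq : 0 < q) (r : ℕ)
    (a : Fin r → ZMod q) (ha : Function.Injective a) (haq : ∀ j, IsUnit (a j))
    (s : ℂ) (hs : 1 < s.re) :
    ∫ x in Set.Ioi (1 : ℝ),
        (((∑ j, PiCnt q (a j) x) - ((r : ℝ) / Nat.totient q) * PiAll x : ℝ) : ℂ)
          * (x : ℂ) ^ (-s - 1)
      = (1 / s) * (∑ χ : DirichletCharacter ℂ q, if χ ≠ 1 then cChi a χ * logL χ s else 0)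
        + ((r : ℂ) / (s * Nat.totient q))
          * ∑ p ∈ q.primeFactors, Complex.log (1 - (p : ℂ) ^ (-s)) := by
  have hσ : (0 : ℝ) < s.re := lt_trans one_pos hs
  have hb : ∀ pk : Nat.Primes × ℕ, 1 < (pk.1 : ℝ) ^ (pk.2 + 1) := fun pk =>
    one_lt_pow₀ (by exact_mod_cast pk.1.2.one_lt) (Nat.succ_ne_zero _)
  have hint : ∀ pk : Nat.Primes × ℕ,
      Integrable (DirIntAux.T q r a s pk) (volume.restrict (Set.Ioi (1 : ℝ))) :=
    fun pk => DirIntAux.indicator_integrable _ hs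
  have hnormeq : ∀ pk : Nat.Primes × ℕ,
      (∫ x in Set.Ioi (1 : ℝ), ‖DirIntAux.T q r a s pk x‖)
        = ‖((DirIntAux.W q r a pk : ℝ) : ℂ)‖ * ((pk.1 : ℝ) ^ (pk.2 + 1)) ^ (-s.re) / s.re := by
    intro pk
    simp only [DirIntAux.T]
    exact DirIntAux.indicator_norm_integral (hb pk) _ hs
  have hnorm : Summable (fun pk : Nat.Primes × ℕ =>
      ∫ x in Set.Ioi (1 : ℝ), ‖DirIntAux.T q r a s pk x‖) := by
    refine Summable.congr ?_ (fun pk => (hnormeq pk).symm)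
    have hE := DirIntAux.summable_E hs
    refine ((hE.mul_left (2 * (r : ℝ))).mul_right (s.re)⁻¹).of_nonneg_of_le
      (fun pk => ?_) (fun pk => ?_)
    · have h1 : (0 : ℝ) ≤ ((pk.1 : ℝ) ^ (pk.2 + 1)) ^ (-s.re) := by positivity
      have h2 : (0 : ℝ) ≤ (s.re)⁻¹ := inv_nonneg.mpr hσ.le
      rw [div_eq_mul_inv]
      exact mul_nonneg (mul_nonneg (norm_nonneg _) h1) h2
    · rw [div_eq_mul_inv]
      refine mul_le_mul_of_nonneg_right
        (mul_le_mul_of_nonneg_right ?_ (by positivity)) (inv_nonneg.mpr hσ.le)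
      rw [Complex.norm_real, Real.norm_eq_abs]
      exact DirIntAux.W_bound hq a pk
  calc ∫ x in Set.Ioi (1 : ℝ),
        (((∑ j, PiCnt q (a j) x) - ((r : ℝ) / Nat.totient q) * PiAll x : ℝ) : ℂ)
          * (x : ℂ) ^ (-s - 1)
      = ∫ x in Set.Ioi (1 : ℝ), ∑' pk : Nat.Primes × ℕ, DirIntAux.T q r a s pk x := by
        refine integral_congr_ae (Filter.Eventually.of_forall fun x => ?_)
        exact DirIntAux.pointwise q r a s x
    _ = ∑' pk : Nat.Primes × ℕ, ∫ x in Set.Ioi (1 : ℝ), DirIntAux.T q r a s pk x :=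
        (integral_tsum_of_summable_integral_norm hint hnorm).symm
    _ = ∑' pk : Nat.Primes × ℕ,
          ((DirIntAux.W q r a pk : ℝ) : ℂ)
            * (((pk.1 : ℕ) : ℂ) ^ ((pk.2 + 1 : ℕ) * s))⁻¹ / s := by
        refine tsum_congr fun pk => ?_
        have h1 : ∫ x in Set.Ioi (1 : ℝ), DirIntAux.T q r a s pk x
            = ((DirIntAux.W q r a pk : ℝ) : ℂ)
              * ((((pk.1 : ℝ) ^ (pk.2 + 1) : ℝ) : ℂ) ^ (-s)) / s := by
          simp only [DirIntAux.T]
          exact DirIntAux.indicator_integral (hb pk) _ hs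
        rw [h1, DirIntAux.ofReal_pow_cpow]
    _ = _ := by
        rw [DirIntAux.tsum_V hq a haq hs]
end

section
/- Let ν ∈ ℂ, let (γ_n)_{n≥1} be a sequence of distinct nonzero real numbers, and let (c_n)_{n≥1} be complex numbers with Σ_n |c_n| < ∞. Then lim_{Y→∞} (1/Y)·∫₀^Y | ν + Σ_n c_n·e^{iγ_n y} |² dy = |ν|² + Σ_n |c_n|². -/
open Filter MeasureTheory Complex

private lemma msap_norm_exp (x : ℝ) : ‖Complex.exp (Complex.I * (x:ℂ))‖ = 1 := by
  simp [Complex.norm_exp]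

private lemma msap_conj_mul (a b y : ℝ) (u v : ℂ) :
    (u * Complex.exp (Complex.I * ((a*y:ℝ):ℂ))) *
      (starRingEnd ℂ) (v * Complex.exp (Complex.I * ((b*y:ℝ):ℂ)))
    = u * (starRingEnd ℂ) v * Complex.exp (Complex.I * (((a-b)*y:ℝ):ℂ)) := by
  rw [map_mul, ← Complex.exp_conj, mul_mul_mul_comm, ← Complex.exp_add]
  congr 2
  simp only [map_mul, Complex.conj_I, Complex.conj_ofReal]
  push_cast
  ring

private lemma msap_integral_exp (a : ℝ) (Y : ℝ) (ha : a ≠ 0) :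
    ∫ y in (0:ℝ)..Y, Complex.exp (Complex.I * ((a*y:ℝ):ℂ))
      = (Complex.exp (Complex.I * a * Y) - 1) / (Complex.I * a) := by
  have h : (Complex.I * a) ≠ 0 := by
    simp [Complex.I_ne_zero, Complex.ofReal_eq_zero, ha]
  have := integral_exp_mul_complex (a := (0:ℝ)) (b := Y) h
  simp only [Complex.ofReal_zero, mul_zero, Complex.exp_zero] at this
  rw [← this]
  congr 1; ext y; push_cast; ring_nf

private lemma msap_norm_integral_exp_le_two_div (a : ℝ) (Y : ℝ) (ha : a ≠ 0) :
    ‖∫ y in (0:ℝ)..Y, Complex.exp (Complex.I * ((a*y:ℝ):ℂ))‖ ≤ 2 / |a| := by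
  rw [msap_integral_exp a Y ha, norm_div]
  have h1 : ‖Complex.exp (Complex.I * a * Y) - 1‖ ≤ 2 := by
    calc ‖Complex.exp (Complex.I * a * Y) - 1‖
        ≤ ‖Complex.exp (Complex.I * a * Y)‖ + ‖(1:ℂ)‖ := norm_sub_le _ _
      _ ≤ 2 := by
          have : Complex.I * a * Y = Complex.I * ((a*Y:ℝ):ℂ) := by push_cast; ring
          rw [this, msap_norm_exp]; norm_num
  have h2 : ‖Complex.I * (a:ℂ)‖ = |a| := by
    simp
  rw [h2]
  exact (div_le_div_iff_of_pos_right (abs_pos.mpr ha)).mpr h1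

private lemma msap_norm_integral_exp_le (a : ℝ) (Y : ℝ) (hY : 0 ≤ Y) :
    ‖∫ y in (0:ℝ)..Y, Complex.exp (Complex.I * ((a*y:ℝ):ℂ))‖ ≤ Y := by
  have := intervalIntegral.norm_integral_le_of_norm_le_const
    (C := 1) (f := fun y : ℝ => Complex.exp (Complex.I * ((a*y:ℝ):ℂ)))
    (a := (0:ℝ)) (b := Y) (fun x _ => le_of_eq (msap_norm_exp _))
  rw [sub_zero, _root_.abs_of_nonneg hY, one_mul] at this
  exact this

/-- Main auxiliary lemma: mean square of an absolutely convergent exponential sum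
with distinct frequencies. -/
private lemma msap_aux (d : ℕ → ℂ) (β : ℕ → ℝ) (hβ : Function.Injective β)
    (hd : Summable fun n => ‖d n‖) :
    Tendsto
      (fun Y : ℝ => (1 / Y) *
        ∫ y in (0:ℝ)..Y,
          ‖∑' n : ℕ, d n * Complex.exp (Complex.I * ((β n * y : ℝ) : ℂ))‖ ^ 2)
      atTop
      (nhds (∑' n : ℕ, ‖d n‖ ^ 2)) := by
  classical
  set E : ℕ → ℝ → ℂ := fun n y => Complex.exp (Complex.I * ((β n * y : ℝ) : ℂ)) with hE
  set F : ℝ → ℂ := fun y => ∑' n : ℕ, d n * E n y with hF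
  have hdnorm : Summable fun n => ‖d n‖ := by
    simpa using hd
  have hnorm : ∀ n y, ‖d n * E n y‖ = ‖d n‖ := by
    intro n y
    rw [norm_mul, hE, msap_norm_exp]
    simp
  have hsumm : ∀ y : ℝ, Summable fun n => d n * E n y := by
    intro y
    apply Summable.of_norm
    simpa only [hnorm] using hd
  have hS : ∀ y : ℝ, HasSum (fun n => d n * E n y) (F y) := fun y => (hsumm y).hasSum
  have hconj : ∀ y : ℝ, HasSum (fun n => (starRingEnd ℂ) (d n * E n y)) ((starRingEnd ℂ) (F y)) :=
    fun y => (hS y).map ((starRingEnd ℂ) : ℂ →+* ℂ).toAddMonoidHom continuous_conj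
  -- the double-indexed family
  set g : ℕ × ℕ → ℝ → ℂ := fun p y =>
    d p.1 * (starRingEnd ℂ) (d p.2) * Complex.exp (Complex.I * (((β p.1 - β p.2) * y : ℝ) : ℂ))
    with hg
  have hgnorm : ∀ p y, ‖g p y‖ = ‖d p.1‖ * ‖d p.2‖ := by
    intro p y
    rw [hg]
    simp only [norm_mul, msap_norm_exp]
    simp
  have hdsum2 : Summable fun p : ℕ × ℕ => ‖d p.1‖ * ‖d p.2‖ := by
    have h := hdnorm.mul_norm hdnorm
    simpa using h
  have hprod : ∀ y : ℝ, HasSum (fun p : ℕ × ℕ => g p y)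
      (((‖F y‖) ^ 2 : ℝ) : ℂ) := by
    intro y
    have hmulsum : Summable fun p : ℕ × ℕ =>
        (d p.1 * E p.1 y) * (starRingEnd ℂ) (d p.2 * E p.2 y) := by
      apply Summable.of_norm
      apply Summable.of_nonneg_of_le (fun _ => norm_nonneg _) _ hdsum2
      intro p
      rw [norm_mul, hnorm, RCLike.norm_conj, hnorm]
    have h := (hS y).mul (hconj y) hmulsum
    have heq : (fun p : ℕ × ℕ => (d p.1 * E p.1 y) * (starRingEnd ℂ) (d p.2 * E p.2 y))
        = fun p => g p y := by
      funext p
      rw [hE, hg]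
      exact msap_conj_mul _ _ _ _ _
    rw [heq] at h
    have : F y * (starRingEnd ℂ) (F y) = (((‖F y‖) ^ 2 : ℝ) : ℂ) := by
      rw [Complex.mul_conj, Complex.sq_norm]
    rwa [this] at h
  -- the normalized Fourier coefficients as functions of Y
  set J : ℕ × ℕ → ℝ → ℂ := fun p Y => ∫ y in (0:ℝ)..Y,
      Complex.exp (Complex.I * (((β p.1 - β p.2) * y : ℝ) : ℂ)) with hJ
  have key : ∀ Y : ℝ, 0 < Y →
      HasSum (fun p : ℕ × ℕ => d p.1 * (starRingEnd ℂ) (d p.2) * J p Y)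
        (((∫ y in (0:ℝ)..Y, ‖F y‖ ^ 2 : ℝ) : ℂ)) := by
    intro Y hY
    have hcont : ∀ p : ℕ × ℕ, Continuous (g p) := by
      intro p
      rw [hg]
      fun_prop
    have hInt : ∀ p, Integrable (g p) (volume.restrict (Set.Ioc (0:ℝ) Y)) :=
      fun p => (hcont p).integrableOn_Ioc
    have hIntNorm : ∀ p : ℕ × ℕ, (∫ y in Set.Ioc (0:ℝ) Y, ‖g p y‖)
        = ‖d p.1‖ * ‖d p.2‖ * Y := by
      intro p
      simp only [hgnorm]
      rw [setIntegral_const, Real.volume_real_Ioc_of_le hY.le, sub_zero,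
        smul_eq_mul, mul_comm]
    have hSum : Summable fun p : ℕ × ℕ => ∫ y in Set.Ioc (0:ℝ) Y, ‖g p y‖ := by
      simp only [hIntNorm]
      exact hdsum2.mul_right Y
    have hHS := hasSum_integral_of_summable_integral_norm hInt hSum
    have h1 : (∫ y in Set.Ioc (0:ℝ) Y, (∑' p : ℕ × ℕ, g p y))
        = ((∫ y in (0:ℝ)..Y, ‖F y‖ ^ 2 : ℝ) : ℂ) := by
      have hpt : ∀ y : ℝ, (∑' p : ℕ × ℕ, g p y) = ((‖F y‖ ^ 2 : ℝ) : ℂ) :=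
        fun y => (hprod y).tsum_eq
      rw [intervalIntegral.integral_of_le hY.le] at *
      simp_rw [hpt]
      exact integral_ofReal
    have h2 : ∀ p : ℕ × ℕ, (∫ y in Set.Ioc (0:ℝ) Y, g p y)
        = d p.1 * (starRingEnd ℂ) (d p.2) * J p Y := by
      intro p
      rw [hJ]
      simp only []
      rw [intervalIntegral.integral_of_le hY.le, hg]
      simp only []
      exact integral_const_mul _ _
    rw [h1] at hHS
    have : (fun p : ℕ × ℕ => ∫ y in Set.Ioc (0:ℝ) Y, g p y)
        = fun p => d p.1 * (starRingEnd ℂ) (d p.2) * J p Y := funext h2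
    rwa [this] at hHS
  -- the limit of each normalized coefficient
  set L : ℕ × ℕ → ℂ := fun p =>
    if p.1 = p.2 then ((‖d p.1‖ ^ 2 : ℝ) : ℂ) else 0 with hL
  have hab : ∀ p : ℕ × ℕ,
      Tendsto (fun Y : ℝ => (Y:ℂ)⁻¹ * (d p.1 * (starRingEnd ℂ) (d p.2) * J p Y))
        atTop (nhds (L p)) := by
    intro p
    by_cases hp : p.1 = p.2
    · have h0 : β p.1 - β p.2 = 0 := by rw [hp, sub_self]
      have hJeq : ∀ Y : ℝ, J p Y = Y := by
        intro Y
        rw [hJ]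
        simp only [h0, zero_mul, Complex.ofReal_zero, mul_zero, Complex.exp_zero]
        simp
      have heq : (fun Y : ℝ => (Y:ℂ)⁻¹ * (d p.1 * (starRingEnd ℂ) (d p.2) * J p Y))
          =ᶠ[atTop] fun _ => L p := by
        filter_upwards [eventually_gt_atTop (0:ℝ)] with Y hY
        have hYne : (Y:ℂ) ≠ 0 := by exact_mod_cast hY.ne'
        rw [hJeq Y, hL]
        simp only [if_pos hp]
        rw [hp]
        rw [Complex.sq_norm, ← Complex.mul_conj]
        field_simp
      exact Tendsto.congr' heq.symm tendsto_const_nhds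
    · have ha : β p.1 - β p.2 ≠ 0 := sub_ne_zero.mpr fun h => hp (hβ h)
      have hL0 : L p = 0 := by rw [hL]; exact if_neg hp
      rw [hL0]
      apply squeeze_zero_norm'
        (a := fun Y : ℝ =>
          ‖d p.1‖ * ‖d p.2‖ * (2 / |β p.1 - β p.2|) * Y⁻¹)
      · filter_upwards [eventually_gt_atTop (0:ℝ)] with Y hY
        have hJle : ‖J p Y‖ ≤ 2 / |β p.1 - β p.2| :=
          msap_norm_integral_exp_le_two_div _ _ ha
        have h1 : ‖(Y:ℂ)⁻¹‖ = Y⁻¹ := by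
          rw [norm_inv]
          simp [_root_.abs_of_nonneg hY.le]
        calc ‖(Y:ℂ)⁻¹ * (d p.1 * (starRingEnd ℂ) (d p.2) * J p Y)‖
            = Y⁻¹ * (‖d p.1‖ * (‖d p.2‖ * ‖J p Y‖)) := by
              rw [norm_mul, h1, norm_mul, norm_mul, RCLike.norm_conj]
              ring
          _ ≤ Y⁻¹ * (‖d p.1‖ *
                (‖d p.2‖ * (2 / |β p.1 - β p.2|))) := by
              gcongr
          _ = ‖d p.1‖ * ‖d p.2‖ * (2 / |β p.1 - β p.2|) * Y⁻¹ := by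
              ring
      · have h0 : Tendsto (fun Y : ℝ => Y⁻¹) atTop (nhds 0) := tendsto_inv_atTop_zero
        have := h0.const_mul
          (‖d p.1‖ * ‖d p.2‖ * (2 / |β p.1 - β p.2|))
        simpa using this
  -- uniform bound
  have h_bound : ∀ᶠ Y : ℝ in atTop, ∀ p : ℕ × ℕ,
      ‖(Y:ℂ)⁻¹ * (d p.1 * (starRingEnd ℂ) (d p.2) * J p Y)‖
        ≤ ‖d p.1‖ * ‖d p.2‖ := by
    filter_upwards [eventually_gt_atTop (0:ℝ)] with Y hY p
    have hJle : ‖J p Y‖ ≤ Y := msap_norm_integral_exp_le _ _ hY.le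
    have h1 : ‖(Y:ℂ)⁻¹‖ = Y⁻¹ := by
      rw [norm_inv]
      simp [_root_.abs_of_nonneg hY.le]
    calc ‖(Y:ℂ)⁻¹ * (d p.1 * (starRingEnd ℂ) (d p.2) * J p Y)‖
        = Y⁻¹ * (‖d p.1‖ * (‖d p.2‖ * ‖J p Y‖)) := by
          rw [norm_mul, h1, norm_mul, norm_mul, RCLike.norm_conj]
          ring
      _ ≤ Y⁻¹ * (‖d p.1‖ * (‖d p.2‖ * Y)) := by
          gcongr
      _ = ‖d p.1‖ * ‖d p.2‖ * (Y⁻¹ * Y) := by ring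
      _ = ‖d p.1‖ * ‖d p.2‖ := by
          rw [inv_mul_cancel₀ hY.ne', mul_one]
  -- Tannery's theorem
  have hT := tendsto_tsum_of_dominated_convergence hdsum2 hab h_bound
  -- compute the sum of the limits
  have hsq : Summable fun n => ‖d n‖ ^ 2 := by
    apply Summable.of_norm_bounded_eventually hd
    have : ∀ᶠ n in cofinite, ‖d n‖ < 1 :=
      hd.tendsto_cofinite_zero.eventually_lt_const one_pos
    filter_upwards [this] with n hn
    rw [Real.norm_eq_abs, _root_.abs_of_nonneg (by positivity), sq]
    calc ‖d n‖ * ‖d n‖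
        ≤ 1 * ‖d n‖ := by gcongr
      _ = ‖d n‖ := one_mul _
  have hLsum : ∑' p : ℕ × ℕ, L p = ((∑' n, ‖d n‖ ^ 2 : ℝ) : ℂ) := by
    have hdiag : Function.Injective (fun n : ℕ => ((n, n) : ℕ × ℕ)) := by
      intro a b h
      simpa using congrArg Prod.fst h
    have hz : Function.support L ⊆ Set.range fun n : ℕ => ((n, n) : ℕ × ℕ) := by
      intro p hp
      rw [Function.mem_support, hL] at hp
      by_cases hpe : p.1 = p.2
      · exact ⟨p.1, by cases p; cases hpe; rfl⟩
      · exact absurd (if_neg hpe) hp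
    rw [← hdiag.tsum_eq hz]
    calc ∑' n : ℕ, L ((fun n : ℕ => ((n, n) : ℕ × ℕ)) n)
        = ∑' n : ℕ, ((‖d n‖ ^ 2 : ℝ) : ℂ) := by
          apply tsum_congr
          intro n
          rw [hL]
          simp
      _ = ((∑' n, ‖d n‖ ^ 2 : ℝ) : ℂ) := (Complex.ofReal_tsum _).symm
  rw [hLsum] at hT
  -- pass to real parts
  have hre := (Complex.continuous_re.tendsto _).comp hT
  rw [Complex.ofReal_re] at hre
  refine Tendsto.congr' ?_ hre
  filter_upwards [eventually_gt_atTop (0:ℝ)] with Y hY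
  have hkey := ((key Y hY).mul_left ((Y:ℂ)⁻¹)).tsum_eq
  simp only [Function.comp_apply]
  rw [hkey, ← Complex.ofReal_inv, ← Complex.ofReal_mul, Complex.ofReal_re, ← one_div]

private def msd (ν : ℂ) (c : ℕ → ℂ) : ℕ → ℂ := fun n => Nat.casesOn n ν c

private def msb (γ : ℕ → ℝ) : ℕ → ℝ := fun n => Nat.casesOn n 0 γ

@[simp] private lemma msd_zero (ν : ℂ) (c : ℕ → ℂ) : msd ν c 0 = ν := rfl
@[simp] private lemma msd_succ (ν : ℂ) (c : ℕ → ℂ) (n : ℕ) : msd ν c (n + 1) = c n := rfl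
@[simp] private lemma msb_zero (γ : ℕ → ℝ) : msb γ 0 = 0 := rfl
@[simp] private lemma msb_succ (γ : ℕ → ℝ) (n : ℕ) : msb γ (n + 1) = γ n := rfl

/-- If `ν ∈ ℂ`, `(γ_n)` are distinct nonzero reals and `Σ_n |c_n| < ∞`, then the
logarithmic-scale mean square of the almost periodic function `ν + Σ_n c_n e^{iγ_n y}`
is `|ν|² + Σ_n |c_n|²`. -/
theorem mean_square_almost_periodic (ν : ℂ) (γ : ℕ → ℝ)
    (hγ : Function.Injective γ) (hγ0 : ∀ n, γ n ≠ 0)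
    (c : ℕ → ℂ) (hc : Summable fun n => ‖c n‖) :
    Tendsto
      (fun Y : ℝ => (1 / Y) *
        ∫ y in (0:ℝ)..Y,
          ‖ν + ∑' n : ℕ, c n * Complex.exp (Complex.I * ((γ n * y : ℝ) : ℂ))‖ ^ 2)
      atTop
      (nhds (‖ν‖ ^ 2 + ∑' n : ℕ, ‖c n‖ ^ 2)) := by
  have hβ : Function.Injective (msb γ) := by
    intro m n h
    cases m with
    | zero =>
      cases n with
      | zero => rfl
      | succ n =>
        rw [msb_zero, msb_succ] at h
        exact absurd h.symm (hγ0 n)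
    | succ m =>
      cases n with
      | zero =>
        rw [msb_zero, msb_succ] at h
        exact absurd h (hγ0 m)
      | succ n =>
        rw [msb_succ, msb_succ] at h
        exact congrArg Nat.succ (hγ h)
  have hd : Summable fun n => ‖msd ν c n‖ := by
    rw [← summable_nat_add_iff 1]
    simpa only [msd_succ] using hc
  have hsq : Summable fun n => ‖msd ν c n‖ ^ 2 := by
    apply Summable.of_norm_bounded_eventually hd
    have h1 : ∀ᶠ n in Filter.cofinite, ‖msd ν c n‖ < 1 :=
      hd.tendsto_cofinite_zero.eventually_lt_const one_pos
    filter_upwards [h1] with n hn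
    rw [Real.norm_eq_abs, _root_.abs_of_nonneg (by positivity), sq]
    calc ‖msd ν c n‖ * ‖msd ν c n‖
        ≤ 1 * ‖msd ν c n‖ := by gcongr
      _ = ‖msd ν c n‖ := one_mul _
  have hpt : ∀ y : ℝ,
      (ν + ∑' n : ℕ, c n * Complex.exp (Complex.I * ((γ n * y : ℝ) : ℂ)))
        = ∑' n : ℕ, msd ν c n * Complex.exp (Complex.I * ((msb γ n * y : ℝ) : ℂ)) := by
    intro y
    have hsummd : Summable fun n =>
        msd ν c n * Complex.exp (Complex.I * ((msb γ n * y : ℝ) : ℂ)) := by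
      apply Summable.of_norm
      have h2 : ∀ n, ‖msd ν c n * Complex.exp (Complex.I * ((msb γ n * y : ℝ) : ℂ))‖
          = ‖msd ν c n‖ := by
        intro n
        rw [norm_mul, msap_norm_exp, mul_one]
      simpa only [h2] using hd
    rw [Summable.tsum_eq_zero_add hsummd]
    simp
  have hlim : ‖ν‖ ^ 2 + ∑' n : ℕ, ‖c n‖ ^ 2
      = ∑' n : ℕ, ‖msd ν c n‖ ^ 2 := by
    rw [Summable.tsum_eq_zero_add hsq]
    simp
  simp only [hpt, hlim]
  exact msap_aux (msd ν c) (msb γ) hβ hd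
end
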